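/- arXiv:2102.03977 — 2 statements merged into one kernel-verified Lean document; each statement's English description precedes it below -/
import Mathlib

section
/- Let V be a finite set of n ≥ 3 nodes, let C ⊆ V be nonempty, and let A₁, …, A_t be a partition of C into t nonempty classes (the classes of a feature f on C), with α_j = |A_j|/|C| for each j. Draw a random subset S ⊆ V by Bernoulli sampling with rate p ∈ [0,1]. Fix ε with 0 < ε ≤ 1, and suppose p·|A_j| ≥ (12/ε²)·ln n for every j = 1, …, t. Then with probability at least 1 − 2(t+1)/n, one has C ∩ S ≠ ∅ and, simultaneously for every j = 1, …, t, α_j·(1 − ε) ≤ |A_j ∩ S| / |C ∩ S| ≤ α_j·(1 + 2ε). -/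
/-- The probability that the Bernoulli-`p` random subset of the finite type `V`
(each node included independently with probability `p`) equals `S`. -/
noncomputable def bernoulliWeight {V : Type*} [Fintype V] [DecidableEq V]
    (p : ℝ) (S : Finset V) : ℝ :=
  p ^ S.card * (1 - p) ^ (Fintype.card V - S.card)

open Classical in
/-- Probability of the event `A` under Bernoulli-`p` sampling of a subset of `V`. -/
noncomputable def prEvent {V : Type*} [Fintype V] [DecidableEq V]
    (p : ℝ) (A : Finset V → Prop) : ℝ :=
  ∑ S : Finset V, if A S then bernoulliWeight p S else 0

open Finset

section Aux

lemma bw_mgf {V : Type*} [Fintype V] [DecidableEq V] (p : ℝ) (B : Finset V) (c : ℝ) :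
    ∑ S : Finset V, bernoulliWeight p S * c ^ ((B ∩ S).card)
      = (1 + p * (c - 1)) ^ B.card := by
  have key : ∀ S : Finset V,
      bernoulliWeight p S * c ^ ((B ∩ S).card)
        = (∏ v ∈ S, (p * (if v ∈ B then c else 1))) * ∏ v ∈ (univ : Finset V) \ S, (1 - p) := by
    intro S
    have h1 : (∏ v ∈ S, (p * (if v ∈ B then c else 1)))
        = p ^ S.card * c ^ ((B ∩ S).card) := by
      rw [Finset.prod_mul_distrib, Finset.prod_const, Finset.prod_ite_mem]
      rw [Finset.prod_const, Finset.inter_comm]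
    have h2 : (∏ v ∈ (univ : Finset V) \ S, (1 - p)) = (1 - p) ^ (Fintype.card V - S.card) := by
      rw [Finset.prod_const]
      congr 1
      rw [Finset.card_sdiff_of_subset (Finset.subset_univ S), Finset.card_univ]
    rw [h1, h2, bernoulliWeight]; ring
  rw [Finset.sum_congr rfl (fun S _ => key S)]
  have hpa := Finset.prod_add (fun v : V => p * (if v ∈ B then c else 1))
    (fun _ : V => (1 - p)) univ
  rw [Finset.powerset_univ] at hpa
  rw [← hpa]
  have hfac : ∀ v : V, p * (if v ∈ B then c else 1) + (1 - p)
      = (if v ∈ B then (1 + p * (c - 1)) else 1) := by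
    intro v; split <;> ring
  rw [Finset.prod_congr rfl (fun v _ => hfac v), Finset.prod_ite_mem, Finset.univ_inter,
    Finset.prod_const]

variable {V : Type*} [Fintype V] [DecidableEq V] {p : ℝ}

lemma bw_nonneg (hp0 : 0 ≤ p) (hp1 : p ≤ 1) (S : Finset V) : 0 ≤ bernoulliWeight p S := by
  unfold bernoulliWeight
  exact mul_nonneg (pow_nonneg hp0 _) (pow_nonneg (by linarith) _)

lemma sum_bw (p : ℝ) : ∑ S : Finset V, bernoulliWeight p S = 1 := by
  have := bw_mgf p (∅ : Finset V) 1
  simpa using this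

open Classical in
lemma prEvent_compl (p : ℝ) (A : Finset V → Prop) :
    prEvent p (fun S => ¬ A S) = 1 - prEvent p A := by
  unfold prEvent
  rw [eq_sub_iff_add_eq, ← Finset.sum_add_distrib, ← sum_bw (V := V) p]
  refine Finset.sum_congr rfl fun S _ => ?_
  by_cases h : A S <;> simp [h]

open Classical in
lemma prEvent_mono (hp0 : 0 ≤ p) (hp1 : p ≤ 1) {A B : Finset V → Prop}
    (h : ∀ S, A S → B S) : prEvent p A ≤ prEvent p B := by
  unfold prEvent
  refine Finset.sum_le_sum fun S _ => ?_
  by_cases hA : A S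
  · simp [hA, h S hA]
  · simp only [hA, if_false]
    split
    · exact bw_nonneg hp0 hp1 S
    · exact le_refl 0

open Classical in
lemma prEvent_or_le (hp0 : 0 ≤ p) (hp1 : p ≤ 1) (A B : Finset V → Prop) :
    prEvent p (fun S => A S ∨ B S) ≤ prEvent p A + prEvent p B := by
  unfold prEvent
  rw [← Finset.sum_add_distrib]
  refine Finset.sum_le_sum fun S _ => ?_
  have hw := bw_nonneg hp0 hp1 S
  by_cases hA : A S <;> by_cases hB : B S <;> simp [hA, hB] <;> linarith

open Classical in
lemma prEvent_exists_le (hp0 : 0 ≤ p) (hp1 : p ≤ 1) {k : ℕ} (E : Fin k → Finset V → Prop) :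
    prEvent p (fun S => ∃ i, E i S) ≤ ∑ i, prEvent p (E i) := by
  unfold prEvent
  rw [Finset.sum_comm]
  refine Finset.sum_le_sum fun S _ => ?_
  by_cases h : ∃ i, E i S
  · obtain ⟨i, hi⟩ := h
    rw [if_pos ⟨i, hi⟩]
    calc bernoulliWeight p S = ∑ j, if j = i then bernoulliWeight p S else 0 := by simp
    _ ≤ ∑ j, if E j S then bernoulliWeight p S else 0 := by
        refine Finset.sum_le_sum fun j _ => ?_
        by_cases hj : j = i
        · simp [hj, hi]
        · simp only [hj, if_false]
          split
          · exact bw_nonneg hp0 hp1 S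
          · exact le_refl 0
  · rw [if_neg h]
    refine Finset.sum_nonneg fun j _ => ?_
    split
    · exact bw_nonneg hp0 hp1 S
    · exact le_refl 0

open Classical in
lemma chernoff_upper (hp0 : 0 ≤ p) (hp1 : p ≤ 1) (B : Finset V) {s : ℝ} (hs : 0 ≤ s) (a : ℝ) :
    prEvent p (fun S => a ≤ ((B ∩ S).card : ℝ))
      ≤ Real.exp (p * B.card * (Real.exp s - 1) - s * a) := by
  have step1 : prEvent p (fun S => a ≤ ((B ∩ S).card : ℝ))
      ≤ ∑ S : Finset V, bernoulliWeight p S * Real.exp (s * ((B ∩ S).card : ℝ) - s * a) := by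
    unfold prEvent
    refine Finset.sum_le_sum fun S _ => ?_
    by_cases h : a ≤ ((B ∩ S).card : ℝ)
    · rw [if_pos h]
      nth_rewrite 1 [← mul_one (bernoulliWeight p S)]
      refine mul_le_mul_of_nonneg_left ?_ (bw_nonneg hp0 hp1 S)
      rw [← Real.exp_zero]
      apply Real.exp_le_exp.2
      have : s * a ≤ s * ((B ∩ S).card : ℝ) := mul_le_mul_of_nonneg_left h hs
      linarith
    · rw [if_neg h]
      exact mul_nonneg (bw_nonneg hp0 hp1 S) (Real.exp_nonneg _)
  refine step1.trans ?_
  have expand : ∀ S : Finset V, bernoulliWeight p S * Real.exp (s * ((B ∩ S).card : ℝ) - s * a)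
      = (bernoulliWeight p S * (Real.exp s) ^ ((B ∩ S).card)) * Real.exp (- (s * a)) := by
    intro S
    rw [← Real.exp_nat_mul, mul_assoc, ← Real.exp_add]
    congr 2
    ring
  rw [Finset.sum_congr rfl (fun S _ => expand S), ← Finset.sum_mul, bw_mgf]
  have hbase : 0 ≤ 1 + p * (Real.exp s - 1) := by
    have : (1:ℝ) ≤ Real.exp s := by
      rw [← Real.exp_zero]; exact Real.exp_le_exp.2 hs
    nlinarith
  have hle : (1 + p * (Real.exp s - 1)) ^ B.card ≤ Real.exp (p * (Real.exp s - 1)) ^ B.card := by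
    apply pow_le_pow_left₀ hbase
    linarith [Real.add_one_le_exp (p * (Real.exp s - 1))]
  calc (1 + p * (Real.exp s - 1)) ^ B.card * Real.exp (-(s * a))
      ≤ Real.exp (p * (Real.exp s - 1)) ^ B.card * Real.exp (-(s * a)) := by
        apply mul_le_mul_of_nonneg_right hle (Real.exp_nonneg _)
    _ = Real.exp (p * B.card * (Real.exp s - 1) - s * a) := by
        rw [← Real.exp_nat_mul, ← Real.exp_add]
        congr 1
        ring

open Classical in
lemma chernoff_lower (hp0 : 0 ≤ p) (hp1 : p ≤ 1) (B : Finset V) {s : ℝ} (hs : 0 ≤ s) (a : ℝ) :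
    prEvent p (fun S => ((B ∩ S).card : ℝ) ≤ a)
      ≤ Real.exp (p * B.card * (Real.exp (-s) - 1) + s * a) := by
  have step1 : prEvent p (fun S => ((B ∩ S).card : ℝ) ≤ a)
      ≤ ∑ S : Finset V, bernoulliWeight p S * Real.exp ((-s) * ((B ∩ S).card : ℝ) + s * a) := by
    unfold prEvent
    refine Finset.sum_le_sum fun S _ => ?_
    by_cases h : ((B ∩ S).card : ℝ) ≤ a
    · rw [if_pos h]
      nth_rewrite 1 [← mul_one (bernoulliWeight p S)]
      refine mul_le_mul_of_nonneg_left ?_ (bw_nonneg hp0 hp1 S)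
      rw [← Real.exp_zero]
      apply Real.exp_le_exp.2
      have : s * ((B ∩ S).card : ℝ) ≤ s * a := mul_le_mul_of_nonneg_left h hs
      linarith
    · rw [if_neg h]
      exact mul_nonneg (bw_nonneg hp0 hp1 S) (Real.exp_nonneg _)
  refine step1.trans ?_
  have expand : ∀ S : Finset V, bernoulliWeight p S * Real.exp ((-s) * ((B ∩ S).card : ℝ) + s * a)
      = (bernoulliWeight p S * (Real.exp (-s)) ^ ((B ∩ S).card)) * Real.exp (s * a) := by
    intro S
    rw [← Real.exp_nat_mul, mul_assoc, ← Real.exp_add]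
    congr 2
    ring
  rw [Finset.sum_congr rfl (fun S _ => expand S), ← Finset.sum_mul, bw_mgf]
  have hbase : 0 ≤ 1 + p * (Real.exp (-s) - 1) := by
    have h1 : Real.exp (-s) ≤ 1 := by
      rw [← Real.exp_zero]; exact Real.exp_le_exp.2 (by linarith)
    have h2 : 0 < Real.exp (-s) := Real.exp_pos _
    nlinarith
  have hle : (1 + p * (Real.exp (-s) - 1)) ^ B.card
      ≤ Real.exp (p * (Real.exp (-s) - 1)) ^ B.card := by
    apply pow_le_pow_left₀ hbase
    linarith [Real.add_one_le_exp (p * (Real.exp (-s) - 1))]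
  calc (1 + p * (Real.exp (-s) - 1)) ^ B.card * Real.exp (s * a)
      ≤ Real.exp (p * (Real.exp (-s) - 1)) ^ B.card * Real.exp (s * a) := by
        apply mul_le_mul_of_nonneg_right hle (Real.exp_nonneg _)
    _ = Real.exp (p * B.card * (Real.exp (-s) - 1) + s * a) := by
        rw [← Real.exp_nat_mul, ← Real.exp_add]
        congr 1
        ring

lemma exp_ub {d : ℝ} (h0 : 0 ≤ d) (h1 : d ≤ 1/2) :
    Real.exp d ≤ 1 + d + (2/3) * d^2 := by
  have hb := Real.exp_bound (x := d) (by rw [abs_of_nonneg h0]; linarith) (n := 3) (by norm_num)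
  have hsum : ∑ m ∈ Finset.range 3, d ^ m / (m.factorial : ℝ) = 1 + d + d^2/2 := by
    norm_num [Finset.sum_range_succ, Nat.factorial]
    try ring
  rw [hsum, abs_of_nonneg h0] at hb
  have h2 := (abs_le.1 hb).2
  norm_num [Nat.factorial] at h2
  nlinarith [sq_nonneg d]

lemma exp_lb {d : ℝ} (h0 : 0 ≤ d) (h1 : d ≤ 1/2) :
    Real.exp (-d) ≤ 1 - d + (2/3) * d^2 := by
  have hb := Real.exp_bound (x := -d)
    (by rw [abs_neg, abs_of_nonneg h0]; linarith) (n := 3) (by norm_num)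
  have hsum : ∑ m ∈ Finset.range 3, (-d) ^ m / (m.factorial : ℝ) = 1 - d + d^2/2 := by
    norm_num [Finset.sum_range_succ, Nat.factorial]
    try ring
  rw [hsum, abs_neg, abs_of_nonneg h0] at hb
  have h2 := (abs_le.1 hb).2
  norm_num [Nat.factorial] at h2
  nlinarith [sq_nonneg d]

/-- Lower-tail bound `Pr[X ≤ (1-ε/2)·p·|B|] ≤ 1/n`. -/
lemma tail_lower (hp0 : 0 ≤ p) (hp1 : p ≤ 1) (B : Finset V) {ε : ℝ} (hε0 : 0 < ε) (hε1 : ε ≤ 1)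
    {n : ℕ} (hn3 : 3 ≤ n)
    (hbig : (12 / ε ^ 2) * Real.log n ≤ p * B.card) :
    prEvent p (fun S => ((B ∩ S).card : ℝ) ≤ (1 - ε/2) * (p * B.card)) ≤ 1 / n := by
  have hn1 : (1:ℝ) < n := by
    have : (3:ℝ) ≤ n := by exact_mod_cast hn3
    linarith
  have hlog : 0 < Real.log n := Real.log_pos hn1
  have hq0 : 0 ≤ p * B.card := le_trans (by positivity) hbig
  have hch := chernoff_lower hp0 hp1 B (s := ε/2) (by linarith) ((1 - ε/2) * (p * B.card))
  refine hch.trans ?_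
  have hel := exp_lb (d := ε/2) (by linarith) (by linarith)
  have hexp : p * B.card * (Real.exp (-(ε/2)) - 1) + (ε/2) * ((1 - ε/2) * (p * B.card))
      ≤ - Real.log n := by
    have hkey : Real.exp (-(ε/2)) - 1 + (ε/2) * (1 - ε/2) ≤ - (ε^2/12) := by nlinarith
    have h2 : p * B.card * (Real.exp (-(ε/2)) - 1 + (ε/2) * (1 - ε/2))
        ≤ p * B.card * (- (ε^2/12)) := mul_le_mul_of_nonneg_left hkey hq0
    have h3 : Real.log n ≤ (ε^2/12) * (p * B.card) := by
      have he2 : 0 < ε ^ 2 := by positivity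
      rw [div_mul_eq_mul_div, div_le_iff₀ he2] at hbig
      nlinarith
    nlinarith
  calc Real.exp (p * B.card * (Real.exp (-(ε/2)) - 1) + (ε/2) * ((1 - ε/2) * (p * B.card)))
      ≤ Real.exp (- Real.log n) := Real.exp_le_exp.2 hexp
    _ = 1 / n := by
        rw [Real.exp_neg, Real.exp_log (by linarith)]
        rw [one_div]

/-- Upper-tail bound `Pr[X ≥ (1+ε/2)·p·|B|] ≤ 1/n`. -/
lemma tail_upper (hp0 : 0 ≤ p) (hp1 : p ≤ 1) (B : Finset V) {ε : ℝ} (hε0 : 0 < ε) (hε1 : ε ≤ 1)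
    {n : ℕ} (hn3 : 3 ≤ n)
    (hbig : (12 / ε ^ 2) * Real.log n ≤ p * B.card) :
    prEvent p (fun S => (1 + ε/2) * (p * B.card) ≤ ((B ∩ S).card : ℝ)) ≤ 1 / n := by
  have hn1 : (1:ℝ) < n := by
    have : (3:ℝ) ≤ n := by exact_mod_cast hn3
    linarith
  have hlog : 0 < Real.log n := Real.log_pos hn1
  have hq0 : 0 ≤ p * B.card := le_trans (by positivity) hbig
  have hch := chernoff_upper hp0 hp1 B (s := ε/2) (by linarith) ((1 + ε/2) * (p * B.card))
  refine hch.trans ?_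
  have heu := exp_ub (d := ε/2) (by linarith) (by linarith)
  have hexp : p * B.card * (Real.exp (ε/2) - 1) - (ε/2) * ((1 + ε/2) * (p * B.card))
      ≤ - Real.log n := by
    have hkey : Real.exp (ε/2) - 1 - (ε/2) * (1 + ε/2) ≤ - (ε^2/12) := by nlinarith
    have h2 : p * B.card * (Real.exp (ε/2) - 1 - (ε/2) * (1 + ε/2))
        ≤ p * B.card * (- (ε^2/12)) := mul_le_mul_of_nonneg_left hkey hq0
    have h3 : Real.log n ≤ (ε^2/12) * (p * B.card) := by
      have he2 : 0 < ε ^ 2 := by positivity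
      rw [div_mul_eq_mul_div, div_le_iff₀ he2] at hbig
      nlinarith
    nlinarith
  calc Real.exp (p * B.card * (Real.exp (ε/2) - 1) - (ε/2) * ((1 + ε/2) * (p * B.card)))
      ≤ Real.exp (- Real.log n) := Real.exp_le_exp.2 hexp
    _ = 1 / n := by
        rw [Real.exp_neg, Real.exp_log (by linarith)]
        rw [one_div]

end Aux

set_option maxHeartbeats 1600000 in
/-- Lemma 2, ω_GF: for a partition `A₁,…,A_t` of `C` with fractions
`α_j = |A_j|/|C|`, if `p·|A_j| ≥ (12/ε²)·ln n` for all `j`, then with probability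
at least `1 − 2(t+1)/n`, `C ∩ S ≠ ∅` and all sampled fractions lie in
`[α_j(1−ε), α_j(1+2ε)]` simultaneously. -/
theorem stmt_4 {V : Type*} [Fintype V] [DecidableEq V]
    (n : ℕ) (hn : Fintype.card V = n) (hn3 : 3 ≤ n)
    (C : Finset V) (hC : C.Nonempty)
    (t : ℕ) (A : Fin t → Finset V)
    (hAne : ∀ j, (A j).Nonempty)
    (hAsub : ∀ j, A j ⊆ C)
    (hAdisj : ∀ j j', j ≠ j' → Disjoint (A j) (A j'))
    (hAcover : ∀ v ∈ C, ∃ j, v ∈ A j)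
    (α : Fin t → ℝ) (hα : ∀ j, α j = ((A j).card : ℝ) / (C.card : ℝ))
    (p : ℝ) (hp0 : 0 ≤ p) (hp1 : p ≤ 1)
    (ε : ℝ) (hε0 : 0 < ε) (hε1 : ε ≤ 1)
    (hpA : ∀ j, (12 / ε ^ 2) * Real.log n ≤ p * ((A j).card : ℝ)) :
    1 - 2 * ((t : ℝ) + 1) / (n : ℝ) ≤
      prEvent p (fun S => (C ∩ S).Nonempty ∧
        ∀ j, α j * (1 - ε) ≤ ((A j ∩ S).card : ℝ) / (((C ∩ S).card : ℝ)) ∧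
          ((A j ∩ S).card : ℝ) / (((C ∩ S).card : ℝ)) ≤ α j * (1 + 2 * ε)) := by
  classical
  obtain ⟨v0, hv0⟩ := hC
  obtain ⟨j0, hj0⟩ := hAcover v0 hv0
  have hn1 : (1:ℝ) < n := by
    have : (3:ℝ) ≤ n := by exact_mod_cast hn3
    linarith
  have hlog : 0 < Real.log n := Real.log_pos hn1
  have hCcard : 0 < C.card := Finset.card_pos.2 ⟨v0, hv0⟩
  have hmC : (0:ℝ) < C.card := by exact_mod_cast hCcard
  -- the hypothesis for C
  have hpC : (12 / ε ^ 2) * Real.log n ≤ p * (C.card : ℝ) := by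
    refine (hpA j0).trans ?_
    have hsub : ((A j0).card : ℝ) ≤ (C.card : ℝ) := by
      exact_mod_cast Finset.card_le_card (hAsub j0)
    exact mul_le_mul_of_nonneg_left hsub hp0
  -- sets indexed by Fin (t+1)
  set Bs : Fin (t+1) → Finset V := Fin.cons C A with hBs
  have hBs0 : Bs 0 = C := by rw [hBs]; exact Fin.cons_zero _ _
  have hBsS : ∀ j : Fin t, Bs j.succ = A j := by
    intro j; rw [hBs]; exact Fin.cons_succ _ _ _
  have hBsbig : ∀ i, (12 / ε ^ 2) * Real.log n ≤ p * ((Bs i).card : ℝ) := by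
    intro i
    induction i using Fin.cases with
    | zero => rw [hBs0]; exact hpC
    | succ j => rw [hBsS j]; exact hpA j
  -- bad events
  set Bad : Finset V → Prop := fun S => ∃ i : Fin (t+1),
    (((Bs i ∩ S).card : ℝ) ≤ (1 - ε/2) * (p * (Bs i).card) ∨
      (1 + ε/2) * (p * (Bs i).card) ≤ ((Bs i ∩ S).card : ℝ)) with hBadDef
  have hBad : prEvent p Bad ≤ 2 * ((t:ℝ) + 1) / n := by
    calc prEvent p Bad
        ≤ ∑ i : Fin (t+1), prEvent p (fun S =>
            ((Bs i ∩ S).card : ℝ) ≤ (1 - ε/2) * (p * (Bs i).card) ∨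
            (1 + ε/2) * (p * (Bs i).card) ≤ ((Bs i ∩ S).card : ℝ)) :=
          prEvent_exists_le hp0 hp1 _
      _ ≤ ∑ _i : Fin (t+1), ((1:ℝ)/n + 1/n) := by
          refine Finset.sum_le_sum fun i _ => ?_
          refine (prEvent_or_le hp0 hp1 _ _).trans ?_
          exact add_le_add (tail_lower hp0 hp1 _ hε0 hε1 hn3 (hBsbig i))
            (tail_upper hp0 hp1 _ hε0 hε1 hn3 (hBsbig i))
      _ = 2 * ((t:ℝ) + 1) / n := by
          rw [Finset.sum_const, Finset.card_univ, Fintype.card_fin]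
          push_cast
          ring
  -- the good event implies the target
  have himp : ∀ S : Finset V, ¬ Bad S →
      ((C ∩ S).Nonempty ∧
        ∀ j, α j * (1 - ε) ≤ ((A j ∩ S).card : ℝ) / (((C ∩ S).card : ℝ)) ∧
          ((A j ∩ S).card : ℝ) / (((C ∩ S).card : ℝ)) ≤ α j * (1 + 2 * ε)) := by
    intro S hS
    simp only [hBadDef] at hS
    push_neg at hS
    have hG : ∀ i : Fin (t+1),
        (1 - ε/2) * (p * (Bs i).card) < ((Bs i ∩ S).card : ℝ) ∧
        ((Bs i ∩ S).card : ℝ) < (1 + ε/2) * (p * (Bs i).card) := hS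
    have hGC := hG 0
    rw [hBs0] at hGC
    have hqC : (0:ℝ) < p * C.card := lt_of_lt_of_le (by positivity) hpC
    have hc0 : (0:ℝ) < ((C ∩ S).card : ℝ) := by
      have := hGC.1
      nlinarith
    have hne : (C ∩ S).Nonempty := by
      rw [← Finset.card_pos]
      exact_mod_cast hc0
    refine ⟨hne, fun j => ?_⟩
    have hGA := hG j.succ
    rw [hBsS j] at hGA
    set a : ℝ := ((A j ∩ S).card : ℝ)
    set c : ℝ := ((C ∩ S).card : ℝ)
    set qA : ℝ := p * ((A j).card : ℝ)
    set qC : ℝ := p * (C.card : ℝ)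
    have hqA0 : 0 ≤ qA := le_trans (by positivity) (hpA j)
    have hα0 : 0 ≤ α j := by
      rw [hα j]
      positivity
    have hαm : α j * qC = qA := by
      rw [hα j]
      field_simp [hmC.ne']
      ring
    have ha_lo : (1 - ε/2) * qA ≤ a := le_of_lt hGA.1
    have ha_hi : a ≤ (1 + ε/2) * qA := le_of_lt hGA.2
    have hc_lo : (1 - ε/2) * qC ≤ c := le_of_lt hGC.1
    have hc_hi : c ≤ (1 + ε/2) * qC := le_of_lt hGC.2
    constructor
    · rw [le_div_iff₀ hc0]
      have h1 : α j * (1 - ε) * c ≤ α j * (1 - ε) * ((1 + ε/2) * qC) := by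
        refine mul_le_mul_of_nonneg_left hc_hi ?_
        exact mul_nonneg hα0 (by linarith)
      have h2 : α j * (1 - ε) * ((1 + ε/2) * qC) = (1 - ε) * (1 + ε/2) * qA := by
        linear_combination ((1 - ε) * (1 + ε/2)) * hαm
      have h3 : (1 - ε) * (1 + ε/2) * qA ≤ (1 - ε/2) * qA := by
        nlinarith [mul_nonneg hqA0 (sq_nonneg ε)]
      linarith
    · rw [div_le_iff₀ hc0]
      have h1 : α j * (1 + 2*ε) * ((1 - ε/2) * qC) ≤ α j * (1 + 2*ε) * c := by
        refine mul_le_mul_of_nonneg_left hc_lo ?_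
        exact mul_nonneg hα0 (by linarith)
      have h2 : α j * (1 + 2*ε) * ((1 - ε/2) * qC) = (1 + 2*ε) * (1 - ε/2) * qA := by
        linear_combination ((1 + 2*ε) * (1 - ε/2)) * hαm
      have h3 : (1 + ε/2) * qA ≤ (1 + 2*ε) * (1 - ε/2) * qA := by
        nlinarith [mul_nonneg hqA0 (mul_nonneg hε0.le (by linarith : (0:ℝ) ≤ 1 - ε))]
      linarith
  have hcompl : prEvent p (fun S => ¬ Bad S) = 1 - prEvent p Bad := prEvent_compl p Bad
  have hmono : prEvent p (fun S => ¬ Bad S) ≤ prEvent p (fun S => (C ∩ S).Nonempty ∧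
      ∀ j, α j * (1 - ε) ≤ ((A j ∩ S).card : ℝ) / (((C ∩ S).card : ℝ)) ∧
        ((A j ∩ S).card : ℝ) / (((C ∩ S).card : ℝ)) ≤ α j * (1 + 2 * ε)) :=
    prEvent_mono hp0 hp1 himp
  linarith
end

section
/- Let (V,d) be a finite metric space, let 𝒫 = {C₁*, …, C_k*} be a partition of V into k nonempty blocks, let W ⊆ V, and suppose 𝒫 satisfies the margin property on W. Let 𝒟 be a partition of W into nonempty blocks refining {C_i* ∩ W : C_i* ∩ W ≠ ∅}, with strictly more blocks than the number of indices i with C_i* ∩ W ≠ ∅. If (D₁, D₂) is a pair of distinct blocks of 𝒟 minimizing the complete-linkage distance, then the partition 𝒟' obtained from 𝒟 by replacing D₁ and D₂ with the single block D₁ ∪ D₂ again refines {C_i* ∩ W : C_i* ∩ W ≠ ∅}. -/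
/-- `P` is a partition of the finite set `W` into nonempty blocks. -/
def IsPartitionOn {V : Type*} [DecidableEq V] (W : Finset V)
    (P : Finset (Finset V)) : Prop :=
  (∀ B ∈ P, B.Nonempty) ∧ (∀ B ∈ P, B ⊆ W) ∧
  (∀ B₁ ∈ P, ∀ B₂ ∈ P, B₁ ≠ B₂ → Disjoint B₁ B₂) ∧
  (∀ v ∈ W, ∃ B ∈ P, v ∈ B)

/-- The partition `P` satisfies the margin property on `W`: any two distinct
points of `W` in the same block of `P` are strictly closer than any two points
of `W` lying in two distinct blocks of `P`. -/
def MarginOn {V : Type*} [MetricSpace V] (P : Finset (Finset V))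
    (W : Finset V) : Prop :=
  ∀ u ∈ W, ∀ v ∈ W, ∀ x ∈ W, ∀ y ∈ W,
    u ≠ v → (∃ B ∈ P, u ∈ B ∧ v ∈ B) →
    (∃ B₁ ∈ P, ∃ B₂ ∈ P, B₁ ≠ B₂ ∧ x ∈ B₁ ∧ y ∈ B₂) →
    dist u v < dist x y

/-- Complete-linkage distance between two finite sets of points:
`d(D₁,D₂) = max_{u ∈ D₁, v ∈ D₂} d(u,v)`. -/
noncomputable def clDist {V : Type*} [MetricSpace V] (D₁ D₂ : Finset V) : ℝ :=
  sSup {r : ℝ | ∃ u ∈ D₁, ∃ v ∈ D₂, r = dist u v}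

/-- `D` refines `Q`: every block of `D` is contained in some block of `Q`. -/
def Refines {V : Type*} (D Q : Finset (Finset V)) : Prop :=
  ∀ B ∈ D, ∃ B' ∈ Q, B ⊆ B'

/-- The restriction of the partition `P` to `W`:
the nonempty sets among `{C ∩ W : C ∈ P}`. -/
def restrictPartition {V : Type*} [DecidableEq V] (P : Finset (Finset V))
    (W : Finset V) : Finset (Finset V) :=
  (P.image (fun C => C ∩ W)).filter Finset.Nonempty

lemma clDist_set_eq {V : Type*} [MetricSpace V] (D₁ D₂ : Finset V) :
    {r : ℝ | ∃ u ∈ D₁, ∃ v ∈ D₂, r = dist u v} =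
      ↑((D₁ ×ˢ D₂).image fun p => dist p.1 p.2) := by
  ext r
  simp only [Set.mem_setOf_eq, Finset.coe_image, Set.mem_image, Finset.mem_coe,
    Finset.mem_product]
  constructor
  · rintro ⟨u, hu, v, hv, rfl⟩; exact ⟨(u, v), ⟨hu, hv⟩, rfl⟩
  · rintro ⟨⟨u, v⟩, ⟨hu, hv⟩, rfl⟩; exact ⟨u, hu, v, hv, rfl⟩

lemma le_clDist {V : Type*} [MetricSpace V] {D₁ D₂ : Finset V} {u v : V}
    (hu : u ∈ D₁) (hv : v ∈ D₂) : dist u v ≤ clDist D₁ D₂ := by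
  apply le_csSup
  · rw [clDist_set_eq]; exact (Finset.finite_toSet _).bddAbove
  · exact ⟨u, hu, v, hv, rfl⟩

lemma clDist_mem {V : Type*} [MetricSpace V] {D₁ D₂ : Finset V}
    (h₁ : D₁.Nonempty) (h₂ : D₂.Nonempty) :
    ∃ u ∈ D₁, ∃ v ∈ D₂, clDist D₁ D₂ = dist u v := by
  have hne : {r : ℝ | ∃ u ∈ D₁, ∃ v ∈ D₂, r = dist u v}.Nonempty := by
    obtain ⟨u, hu⟩ := h₁; obtain ⟨v, hv⟩ := h₂
    exact ⟨dist u v, u, hu, v, hv, rfl⟩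
  have hfin : {r : ℝ | ∃ u ∈ D₁, ∃ v ∈ D₂, r = dist u v}.Finite := by
    rw [clDist_set_eq]; exact Finset.finite_toSet _
  exact hne.csSup_mem hfin

/-- merge invariant: under the margin property, merging a closest
pair (in complete-linkage distance) of distinct blocks of a refining partition
`D` of `W` — with strictly more blocks than the restriction of `P` to `W` —
produces a partition that again refines the restricted ground-truth partition. -/
theorem stmt_9 {V : Type*} [MetricSpace V] [Fintype V] [DecidableEq V]
    (k : ℕ) (P : Finset (Finset V))
    (hP : IsPartitionOn Finset.univ P) (hPk : P.card = k)
    (W : Finset V) (hmargin : MarginOn P W)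
    (D : Finset (Finset V)) (hD : IsPartitionOn W D)
    (href : Refines D (restrictPartition P W))
    (hcard : (restrictPartition P W).card < D.card)
    (D₁ D₂ : Finset V) (hD₁ : D₁ ∈ D) (hD₂ : D₂ ∈ D) (hne : D₁ ≠ D₂)
    (hmin : ∀ E₁ ∈ D, ∀ E₂ ∈ D, E₁ ≠ E₂ → clDist D₁ D₂ ≤ clDist E₁ E₂) :
    Refines (insert (D₁ ∪ D₂) ((D.erase D₁).erase D₂))
      (restrictPartition P W) := by
  intro B hB
  rw [Finset.mem_insert] at hB
  rcases hB with rfl | hB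
  · -- main case: show D₁ ∪ D₂ lie in one restricted block
    obtain ⟨C₁', hC₁', hsub₁⟩ := href D₁ hD₁
    obtain ⟨C₂', hC₂', hsub₂⟩ := href D₂ hD₂
    suffices h : C₁' = C₂' by
      exact ⟨C₁', hC₁', Finset.union_subset hsub₁ (h ▸ hsub₂)⟩
    by_contra hCC
    -- pigeonhole: two distinct blocks of D inside one restricted block
    classical
    have hmap : ∀ E ∈ D, (fun E => if h : E ∈ D then (href E h).choose else ∅) E
        ∈ restrictPartition P W := by
      intro E hE
      simp only [dif_pos hE]
      exact (href E hE).choose_spec.1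
    obtain ⟨E₁, hE₁, E₂, hE₂, hEne, hEeq⟩ :=
      Finset.exists_ne_map_eq_of_card_lt_of_maps_to hcard hmap
    simp only [dif_pos hE₁, dif_pos hE₂] at hEeq
    set C' := (href E₁ hE₁).choose with hC'def
    have hC'mem : C' ∈ restrictPartition P W := (href E₁ hE₁).choose_spec.1
    have hsubE₁ : E₁ ⊆ C' := (href E₁ hE₁).choose_spec.2
    have hsubE₂ : E₂ ⊆ C' := hEeq ▸ (href E₂ hE₂).choose_spec.2
    -- structure of restricted blocks
    simp only [restrictPartition, Finset.mem_filter, Finset.mem_image] at hC'mem hC₁' hC₂'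
    obtain ⟨⟨C, hC, hCeq⟩, -⟩ := hC'mem
    obtain ⟨⟨Cx, hCx, hCxeq⟩, -⟩ := hC₁'
    obtain ⟨⟨Cy, hCy, hCyeq⟩, -⟩ := hC₂'
    have hCxy : Cx ≠ Cy := fun h => hCC (by rw [← hCxeq, ← hCyeq, h])
    -- points x ∈ D₁, y ∈ D₂ lie in distinct ground-truth blocks
    obtain ⟨x, hx⟩ := hD.1 D₁ hD₁
    obtain ⟨y, hy⟩ := hD.1 D₂ hD₂
    have hxW : x ∈ W := hD.2.1 D₁ hD₁ hx
    have hyW : y ∈ W := hD.2.1 D₂ hD₂ hy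
    have hxC : x ∈ Cx := (Finset.mem_inter.mp (hCxeq ▸ hsub₁ hx)).1
    have hyC : y ∈ Cy := (Finset.mem_inter.mp (hCyeq ▸ hsub₂ hy)).1
    -- the merged pair E₁ E₂ has all pairs in the same block
    obtain ⟨u, hu, v, hv, hcl⟩ := clDist_mem (hD.1 E₁ hE₁) (hD.1 E₂ hE₂)
    have huv : u ≠ v := by
      intro h
      exact Finset.disjoint_left.mp (hD.2.2.1 E₁ hE₁ E₂ hE₂ hEne) hu (h ▸ hv)
    have huC : u ∈ C := (Finset.mem_inter.mp (hCeq ▸ hsubE₁ hu)).1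
    have hvC : v ∈ C := (Finset.mem_inter.mp (hCeq ▸ hsubE₂ hv)).1
    have huW : u ∈ W := hD.2.1 E₁ hE₁ hu
    have hvW : v ∈ W := hD.2.1 E₂ hE₂ hv
    have hlt : dist u v < dist x y :=
      hmargin u huW v hvW x hxW y hyW huv ⟨C, hC, huC, hvC⟩
        ⟨Cx, hCx, Cy, hCy, hCxy, hxC, hyC⟩
    have h1 : clDist D₁ D₂ ≤ clDist E₁ E₂ := hmin E₁ hE₁ E₂ hE₂ hEne
    have h2 : dist x y ≤ clDist D₁ D₂ := le_clDist hx hy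
    rw [hcl] at h1
    linarith
  · exact href B (Finset.mem_of_mem_erase (Finset.mem_of_mem_erase hB))
end
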